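/- arXiv:2410.16149 — 2 statements merged into one kernel-verified Lean document; each statement's English description precedes it below -/
import Mathlib

section
/- (Proposition 2) Let x ∈ A_{d+1} and v ∈ ℝ. Then x ∈ H_d and v = ‖x‖₂² if and only if the matrix V(x, v) is positive semi-definite and has rank d+1. -/
open Finset Matrix

/-- The Minkowski bilinear form on `ℝ^{d+1}`. -/
noncomputable def minkowski {d : ℕ} (x y : Fin (d+1) → ℝ) : ℝ :=
  (∑ i : Fin d, x i.castSucc * y i.castSucc) - x (Fin.last d) * y (Fin.last d)

/-- The hyperbolic space `H_d`. -/
def hyperSheet (d : ℕ) : Set (Fin (d+1) → ℝ) :=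
  {x | minkowski x x = -1 ∧ 0 < x (Fin.last d)}

/-- `ξ̃ = (ξ_1, …, ξ_d, −ξ_{d+1})`. -/
def tilde {d : ℕ} (x : Fin (d+1) → ℝ) : Fin (d+1) → ℝ :=
  fun i => if i = Fin.last d then -x i else x i

/-- The symmetric `(d+3)×(d+3)` block matrix
`V = [I_{d+1}, x, x̃; xᵀ, v, −1; x̃ᵀ, −1, v]`. -/
noncomputable def Vmat {d : ℕ} (x : Fin (d+1) → ℝ) (v : ℝ) :
    Matrix (Fin (d+1+2)) (Fin (d+1+2)) ℝ :=
  Matrix.reindex finSumFinEquiv finSumFinEquiv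
    (Matrix.fromBlocks 1 (Matrix.of fun i j => ![x, tilde x] j i)
      (Matrix.of fun i j => ![x, tilde x] i j)
      !![v, -1; -1, v])

/-!
Write `V(x, v)` as the block matrix `[1, B; Bᴴ, C]` with `B = [x | x̃]` and `C = [v, -1; -1, v]`.
Projecting onto the last two coordinates identifies the kernel of `V` with the kernel of the
Schur complement `S = C - BᴴB`, so `rank V = (d + 1) + rank S`; and `V ⪰ 0` iff `S ⪰ 0`.
Hence `V ⪰ 0` with `rank V = d + 1` iff `S = 0`. Since `BᴴB` is the Gram matrix
`[‖x‖², η(x,x); η(x,x), ‖x‖²]`, the condition `S = 0` says exactly `v = ‖x‖²` and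
`η(x,x) = -1`, and `x_{d+1} ≥ 1` supplies the sheet condition `x_{d+1} > 0`.
-/

namespace Matrix

variable {K m n : Type*} [Field K] [Fintype n]

theorem rank_eq_zero_iff {A : Matrix m n K} : A.rank = 0 ↔ A = 0 := by
  classical
  rw [rank, Submodule.finrank_eq_zero, LinearMap.range_eq_bot, ← toLin'_apply',
    LinearEquiv.map_eq_zero_iff]

variable [Fintype m] [DecidableEq m]

theorem fromBlocks_one_mulVec_eq_zero_iff (B : Matrix m n K) (C : Matrix n m K)
    (D : Matrix n n K) (u : m ⊕ n → K) :
    fromBlocks 1 B C D *ᵥ u = 0 ↔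
      u ∘ Sum.inl = -(B *ᵥ (u ∘ Sum.inr)) ∧ (D - C * B) *ᵥ (u ∘ Sum.inr) = 0 := by
  rw [fromBlocks_mulVec, one_mulVec, ← Sum.elim_zero_zero, Sum.elim_eq_iff,
    ← eq_neg_iff_add_eq_zero, sub_mulVec, ← mulVec_mulVec, sub_eq_zero]
  refine and_congr_right fun hl => ?_
  rw [hl, mulVec_neg, neg_add_eq_zero, eq_comm]

def kerFromBlocksOneEquiv (B : Matrix m n K) (C : Matrix n m K) (D : Matrix n n K) :
    LinearMap.ker (fromBlocks 1 B C D).mulVecLin ≃ₗ[K] LinearMap.ker (D - C * B).mulVecLin where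
  toFun u := ⟨u.1 ∘ Sum.inr, ((fromBlocks_one_mulVec_eq_zero_iff B C D u).mp u.2).2⟩
  invFun w := ⟨Sum.elim (-(B *ᵥ w.1)) w.1,
    (fromBlocks_one_mulVec_eq_zero_iff B C D _).mpr ⟨rfl, w.2⟩⟩
  map_add' _ _ := rfl
  map_smul' _ _ := rfl
  left_inv u := by
    ext (i | i)
    · exact (congrFun ((fromBlocks_one_mulVec_eq_zero_iff B C D u).mp u.2).1 i).symm
    · rfl
  right_inv _ := rfl

theorem rank_fromBlocks_one (B : Matrix m n K) (C : Matrix n m K) (D : Matrix n n K) :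
    (fromBlocks 1 B C D).rank = Fintype.card m + (D - C * B).rank := by
  have hM := LinearMap.finrank_range_add_finrank_ker (fromBlocks 1 B C D).mulVecLin
  have hS := LinearMap.finrank_range_add_finrank_ker (D - C * B).mulVecLin
  rw [(kerFromBlocksOneEquiv B C D).finrank_eq] at hM
  simp only [Module.finrank_fintype_fun_eq_card, Fintype.card_sum] at hM hS
  rw [rank, rank]
  omega

theorem rank_fromBlocks_one_eq_card_iff (B : Matrix m n K) (C : Matrix n m K)
    (D : Matrix n n K) : (fromBlocks 1 B C D).rank = Fintype.card m ↔ D = C * B := by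
  rw [rank_fromBlocks_one, Nat.add_eq_left, rank_eq_zero_iff, sub_eq_zero]

section StarOrdered

variable [PartialOrder K] [StarRing K] [StarOrderedRing K]

theorem posSemidef_fromBlocks_one_iff (B : Matrix m n K) (D : Matrix n n K) :
    (fromBlocks 1 B Bᴴ D).PosSemidef ↔ (D - Bᴴ * B).PosSemidef := by
  have : Invertible (1 : Matrix m m K) := invertibleOne
  rw [PosDef.fromBlocks₁₁ B D PosDef.one, inv_one, Matrix.mul_one]

theorem posSemidef_and_rank_eq_card_fromBlocks_one_iff (B : Matrix m n K) (D : Matrix n n K) :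
    (fromBlocks 1 B Bᴴ D).PosSemidef ∧ (fromBlocks 1 B Bᴴ D).rank = Fintype.card m ↔
      D = Bᴴ * B := by
  rw [rank_fromBlocks_one_eq_card_iff, and_iff_right_iff_imp]
  intro hD
  rw [posSemidef_fromBlocks_one_iff, hD, sub_self]
  exact PosSemidef.zero

end StarOrdered

end Matrix

section Hyperboloid

variable {d : ℕ}

def tildeCols (x : Fin (d+1) → ℝ) : Matrix (Fin (d+1)) (Fin 2) ℝ :=
  of fun i j => ![x, tilde x] j i

theorem Vmat_eq_reindex_fromBlocks (x : Fin (d+1) → ℝ) (v : ℝ) :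
    Vmat x v = reindex finSumFinEquiv finSumFinEquiv
      (fromBlocks 1 (tildeCols x) (tildeCols x)ᴴ !![v, -1; -1, v]) :=
  rfl

theorem tilde_apply_mul_self (x : Fin (d+1) → ℝ) (i : Fin (d+1)) :
    tilde x i * tilde x i = x i * x i := by
  unfold tilde
  split_ifs <;> ring

theorem dotProduct_tilde_eq_minkowski (x : Fin (d+1) → ℝ) :
    x ⬝ᵥ tilde x = minkowski x x := by
  simp [dotProduct, Fin.sum_univ_castSucc, tilde, minkowski, (Fin.castSucc_lt_last _).ne,
    sub_eq_add_neg]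

theorem conjTranspose_tildeCols_mul_self (x : Fin (d+1) → ℝ) :
    (tildeCols x)ᴴ * tildeCols x =
      !![∑ i, x i ^ 2, minkowski x x; minkowski x x, ∑ i, x i ^ 2] := by
  ext i j
  fin_cases i <;> fin_cases j <;>
    simp [tildeCols, mul_apply, sq, ← dotProduct_tilde_eq_minkowski, dotProduct,
      tilde_apply_mul_self, mul_comm]

end Hyperboloid

/-- Proposition 2: for `x ∈ A_{d+1}`, one has `x ∈ H_d` and `v = ‖x‖₂²`
if and only if `V(x,v) ⪰ 0` and `rank V(x,v) = d+1`. -/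
theorem hyperbolic_small_matrix_characterization (d : ℕ) (x : Fin (d+1) → ℝ)
    (hx : 1 ≤ x (Fin.last d)) (v : ℝ) :
    (x ∈ hyperSheet d ∧ v = ∑ i, x i ^ 2) ↔
    ((Vmat x v).PosSemidef ∧ (Vmat x v).rank = d + 1) := by
  have hSchur := posSemidef_and_rank_eq_card_fromBlocks_one_iff (tildeCols x) !![v, -1; -1, v]
  rw [Fintype.card_fin, conjTranspose_tildeCols_mul_self] at hSchur
  rw [Vmat_eq_reindex_fromBlocks, reindex_apply, posSemidef_submatrix_equiv, rank_submatrix,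
    hSchur]
  have hpos : 0 < x (Fin.last d) := one_pos.trans_le hx
  simp only [hyperSheet, Set.mem_ofPred_eq, EmbeddingLike.apply_eq_iff_eq, vecCons_inj, hpos,
    and_true, eq_comm (a := (-1 : ℝ))]
  tauto
end

section
/- If V(x_n, v_n) and V(x_m, v_m) are positive semi-definite, then with the canonical choices ℓ = η(x_n, x_m) and f = ⟨x_n, x_m⟩ the matrix Q(x_n, x_m, v_n, v_m, f, ℓ) is positive semi-definite. -/
open Finset Matrix

/-- The symmetric `(d+5)×(d+5)` block matrix `Q`. -/
noncomputable def Qmat {d : ℕ} (xn xm : Fin (d+1) → ℝ) (vn vm f l : ℝ) :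
    Matrix (Fin (d+1+4)) (Fin (d+1+4)) ℝ :=
  Matrix.reindex finSumFinEquiv finSumFinEquiv
    (Matrix.fromBlocks 1 (Matrix.of fun i j => ![xn, tilde xn, xm, tilde xm] j i)
      (Matrix.of fun i j => ![xn, tilde xn, xm, tilde xm] i j)
      !![vn, -1, f, l; -1, vn, l, f; f, l, vm, -1; l, f, -1, vm])

/-!
Both matrices have the identity as upper-left block, so by the Schur complement criterion
`V(x, v)` is positive semidefinite iff `[v, -1; -1, v] - G(x, x̃)` is, where `G` is the Gram matrix
for the Euclidean inner product; likewise `Q` is iff its lower-right block minus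
`G(x_n, x̃_n, x_m, x̃_m)` is. Since `⟨x̃, ỹ⟩ = ⟨x, y⟩` and `⟨x, ỹ⟩ = ⟨x̃, y⟩ = η(x, y)`, the canonical
`f` and `ℓ` are exactly the Gram entries between the `n`- and `m`-vectors. Hence the Schur complement
of `Q` is block diagonal, its two blocks being those of `V(x_n, v_n)` and `V(x_m, v_m)`.
-/

namespace Matrix

variable {m n p R K : Type*}

@[simp]
lemma of_mul_transpose_of_apply [Fintype n] [NonUnitalNonAssocSemiring R] (u : m → n → R)
    (i j : m) : (of u * (of u)ᵀ) i j = u i ⬝ᵥ u j :=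
  rfl

variable [Fintype m] [Fintype n]

theorem PosSemidef.fromBlocks_zero_zero [CommRing R] [PartialOrder R] [StarRing R]
    [StarOrderedRing R] [DecidableEq m] [DecidableEq n] {A : Matrix m m R} {D : Matrix n n R}
    (hA : A.PosSemidef) (hD : D.PosSemidef) : (fromBlocks A 0 0 D).PosSemidef := by
  convert (hA.conjTranspose_mul_mul_same (fromCols 1 0 : Matrix m (m ⊕ n) R)).add
    (hD.conjTranspose_mul_mul_same (fromCols 0 1 : Matrix n (m ⊕ n) R)) using 1
  simp only [conjTranspose_fromCols_eq_fromRows_conjTranspose, fromRows_mul, mul_fromCols]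
  ext (i | i) (j | j) <;> simp

variable [Field K] [PartialOrder K] [StarRing K] [StarOrderedRing K] [DecidableEq m]

theorem posSemidef_reindex_fromBlocks_one_iff (e : m ⊕ n ≃ p) (B : Matrix m n K)
    (D : Matrix n n K) :
    (reindex e e (fromBlocks 1 B Bᴴ D)).PosSemidef ↔ (D - Bᴴ * B).PosSemidef := by
  let _ : Invertible (1 : Matrix m m K) := invertibleOne
  rw [reindex_apply, posSemidef_submatrix_equiv, PosDef.fromBlocks₁₁ B D PosDef.one, inv_one,
    Matrix.mul_one]

theorem posSemidef_reindex_fromBlocks_one_transpose_iff [TrivialStar K] (e : m ⊕ n ≃ p)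
    (u : n → m → K) (D : Matrix n n K) :
    (reindex e e (fromBlocks 1 (of u)ᵀ (of u) D)).PosSemidef ↔
      (D - of u * (of u)ᵀ).PosSemidef := by
  have := posSemidef_reindex_fromBlocks_one_iff e (of u)ᵀ D
  rwa [conjTranspose_eq_transpose_of_trivial, transpose_transpose] at this

end Matrix

section Tilde

variable {d : ℕ} (x y : Fin (d+1) → ℝ)

@[simp]
lemma tilde_tilde : tilde (tilde x) = x := by
  funext i
  by_cases h : i = Fin.last d <;> simp [tilde, h]

lemma minkowski_comm : minkowski x y = minkowski y x := by
  simp only [minkowski, mul_comm]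

@[simp]
lemma dotProduct_tilde : x ⬝ᵥ tilde y = minkowski x y := by
  rw [dotProduct, Fin.sum_univ_castSucc, minkowski]
  simp [tilde, Fin.castSucc_ne_last, sub_eq_add_neg]

@[simp]
lemma tilde_dotProduct : tilde x ⬝ᵥ y = minkowski x y := by
  rw [dotProduct_comm, dotProduct_tilde, minkowski_comm]

@[simp]
lemma minkowski_tilde_left : minkowski (tilde x) y = x ⬝ᵥ y := by
  rw [← tilde_dotProduct, tilde_tilde]

end Tilde

noncomputable def vSchur {d : ℕ} (x : Fin (d+1) → ℝ) (v : ℝ) : Matrix (Fin 2) (Fin 2) ℝ :=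
  !![v, -1; -1, v] - of ![x, tilde x] * (of ![x, tilde x])ᵀ

lemma vSchur_eq {d : ℕ} (x : Fin (d+1) → ℝ) (v : ℝ) :
    vSchur x v = !![v - x ⬝ᵥ x, -1 - minkowski x x; -1 - minkowski x x, v - x ⬝ᵥ x] := by
  ext i j
  -- Rewrite Gram entries to dot products first; plain `simp` would expand the product row-wise.
  fin_cases i <;> fin_cases j <;>
    simp only [vSchur, Matrix.sub_apply, of_mul_transpose_of_apply] <;> simp

lemma Vmat_posSemidef_iff {d : ℕ} (x : Fin (d+1) → ℝ) (v : ℝ) :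
    (Vmat x v).PosSemidef ↔ (vSchur x v).PosSemidef :=
  posSemidef_reindex_fromBlocks_one_transpose_iff _ _ _

lemma Qmat_posSemidef_iff {d : ℕ} (xn xm : Fin (d+1) → ℝ) (vn vm : ℝ) :
    (Qmat xn xm vn vm (xn ⬝ᵥ xm) (minkowski xn xm)).PosSemidef ↔
      (fromBlocks (vSchur xn vn) 0 0 (vSchur xm vm)).PosSemidef := by
  refine (posSemidef_reindex_fromBlocks_one_transpose_iff _ ![xn, tilde xn, xm, tilde xm] _).trans
    ((Iff.of_eq (congrArg PosSemidef ?_)).trans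
      (posSemidef_submatrix_equiv (finSumFinEquiv (m := 2) (n := 2)).symm))
  ext i j
  -- `simp` cannot evaluate `finSumFinEquiv.symm k` at a numeral `k`; the final `rfl` does.
  fin_cases i <;> fin_cases j <;>
    simp only [Matrix.sub_apply, of_mul_transpose_of_apply, submatrix_apply] <;>
    simp [vSchur_eq, dotProduct_comm xm xn, minkowski_comm xm xn] <;> rfl

/-- If `V(x_n, v_n)` and `V(x_m, v_m)` are positive semi-definite, then with the
canonical choices `ℓ = η(x_n,x_m)` and `f = ⟨x_n,x_m⟩` the matrix `Q` is
positive semi-definite. -/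
theorem Qmat_posSemidef_of_Vmat_posSemidef (d : ℕ) (xn xm : Fin (d+1) → ℝ)
    (vn vm : ℝ) (hVn : (Vmat xn vn).PosSemidef) (hVm : (Vmat xm vm).PosSemidef) :
    (Qmat xn xm vn vm (∑ i, xn i * xm i) (minkowski xn xm)).PosSemidef :=
  (Qmat_posSemidef_iff xn xm vn vm).mpr <|
    ((Vmat_posSemidef_iff xn vn).mp hVn).fromBlocks_zero_zero ((Vmat_posSemidef_iff xm vm).mp hVm)
end
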